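/- arXiv:2412.21075 — 2 statements merged into one kernel-verified Lean document; each statement's English description precedes it below -/
import Mathlib

section
/- Let g, h ∈ 𝒢. The following are equivalent: (a) whenever K ⊆ V[g(n)] is bounded in the norm ‖·‖_{φ_g} and relatively compact with respect to the supremum norm ‖·‖_∞, then K ⊆ V[h(n)] and K is relatively compact in the norm ‖·‖_{φ_h}; (b) g(n) = o(h(n)), i.e. lim_{n→∞} g(n)/h(n) = 0; (c) Exh(φ_{g^M}) ⊆ Exh(φ_h) for some increasing sequence M = (m_k) of natural numbers. -/
open Filter Set
open scoped ENNReal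

/-- A Waterman sequence: a nonincreasing sequence of positive reals whose series diverges. -/
def IsWaterman (a : ℕ → ℝ) : Prop :=
  Antitone a ∧ (∀ n, 0 < a n) ∧ ¬ Summable a

/-- A Waterman sequence is proper if it moreover tends to zero. -/
def IsProperWaterman (a : ℕ → ℝ) : Prop :=
  IsWaterman a ∧ Tendsto a atTop (nhds 0)

/-- An admissible sequence of nonoverlapping closed subintervals `[s n, t n]` of `[0,1]`:
the intervals are contained in `[0,1]` and have pairwise disjoint interiors. -/
def Nonoverlapping (s t : ℕ → ℝ) : Prop :=
  (∀ n, 0 ≤ s n ∧ s n ≤ t n ∧ t n ≤ 1) ∧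
  Pairwise fun m n => Disjoint (Set.Ioo (s m) (t m)) (Set.Ioo (s n) (t n))

/-- The `A`-variation (in the sense of Waterman) of `x` on `[0,1]`, with values in `[0,∞]`. -/
noncomputable def eVar (a : ℕ → ℝ) (x : ℝ → ℝ) : ℝ≥0∞ :=
  ⨆ p : {p : (ℕ → ℝ) × (ℕ → ℝ) // Nonoverlapping p.1 p.2},
    ∑' n, ENNReal.ofReal (a n * |x (p.1.2 n) - x (p.1.1 n)|)

/-- Membership in the space `ABV` of functions of bounded `A`-variation. -/
def MemABV (a : ℕ → ℝ) (x : ℝ → ℝ) : Prop := eVar a x < ⊤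

/-- The norm `‖x‖_{ABV} = |x(0)| + var_A(x)`, with values in `[0,∞]`. -/
noncomputable def eNormABV (a : ℕ → ℝ) (x : ℝ → ℝ) : ℝ≥0∞ :=
  ENNReal.ofReal |x 0| + eVar a x

/-- The supremum norm of `x` on `[0,1]`, with values in `[0,∞]`. -/
noncomputable def eSupNorm (x : ℝ → ℝ) : ℝ≥0∞ :=
  ⨆ t ∈ Set.Icc (0 : ℝ) 1, ENNReal.ofReal |x t|

/-- `x` is bounded on `[0,1]`. -/
def BoundedOn01 (x : ℝ → ℝ) : Prop := ∃ C : ℝ, ∀ t ∈ Set.Icc (0 : ℝ) 1, |x t| ≤ C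

/-- `K` is relatively compact with respect to the supremum norm on `[0,1]`: every sequence
in `K` has a subsequence converging in the supremum norm to some bounded function. -/
def RelCompSup (K : Set (ℝ → ℝ)) : Prop :=
  ∀ u : ℕ → ℝ → ℝ, (∀ j, u j ∈ K) →
    ∃ φ : ℕ → ℕ, StrictMono φ ∧ ∃ x : ℝ → ℝ, BoundedOn01 x ∧
      Tendsto (fun k => eSupNorm (u (φ k) - x)) atTop (nhds 0)

/-- `K` is relatively compact in the norm of the space `BBV` (for the sequence `b`):
every sequence in `K` has a subsequence converging in `‖·‖_{BBV}` to an element of `BBV`. -/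
def RelCompABV (b : ℕ → ℝ) (K : Set (ℝ → ℝ)) : Prop :=
  ∀ u : ℕ → ℝ → ℝ, (∀ j, u j ∈ K) →
    ∃ φ : ℕ → ℕ, StrictMono φ ∧ ∃ x : ℝ → ℝ, MemABV b x ∧
      Tendsto (fun k => eNormABV b (u (φ k) - x)) atTop (nhds 0)

/-- `K` is a bounded subset of `ABV`. -/
def BddInABV (a : ℕ → ℝ) (K : Set (ℝ → ℝ)) : Prop :=
  ∃ M : ℝ≥0∞, M < ⊤ ∧ ∀ x ∈ K, eNormABV a x ≤ M

/-- `∑_{k=1}^n b_k = o(∑_{k=1}^n a_k)`. -/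
def PartialSumsLittleO (a b : ℕ → ℝ) : Prop :=
  Tendsto (fun n => (∑ k ∈ Finset.range n, b k) / (∑ k ∈ Finset.range n, a k))
    atTop (nhds 0)

/-- Condition (b): for every `ε > 0` there is `k₀` such that for every nonincreasing
nonnegative sequence `c` tending to `0` with `∑ aₙcₙ < ∞` one has
`∑_{n>k₀} bₙcₙ ≤ ε ∑ₙ aₙcₙ`. -/
def SmallTailCond (a b : ℕ → ℝ) : Prop :=
  ∀ ε : ℝ, 0 < ε → ∃ k₀ : ℕ, ∀ c : ℕ → ℝ,
    (∀ n, 0 ≤ c n) → Antitone c → Tendsto c atTop (nhds 0) →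
    (∑' n, ENNReal.ofReal (a n * c n)) < ⊤ →
    (∑' n, ENNReal.ofReal (b (n + k₀) * c (n + k₀))) ≤
      ENNReal.ofReal ε * ∑' n, ENNReal.ofReal (a n * c n)

/-- The compact-embedding property from `ABV` into `BBV`: every bounded subset of `ABV`
which is relatively compact in the supremum norm is contained in `BBV` and relatively
compact there. -/
def CompactEmbeddingABV (a b : ℕ → ℝ) : Prop :=
  ∀ K : Set (ℝ → ℝ), (∀ x ∈ K, MemABV a x) → BddInABV a K → RelCompSup K →
    (∀ x ∈ K, MemABV b x) ∧ RelCompABV b K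

/-- The summable ideal `I_A = {C ⊆ ℕ : ∑_{n ∈ C} a_n < ∞}` (as a family of sets;
it may equal `P(ℕ)` when `∑ a_n < ∞`). -/
def IdealOf (a : ℕ → ℝ) : Set (Set ℕ) := {C : Set ℕ | Summable fun n : C => a n}

/-- The Katětov order on families of subsets of `ℕ`. -/
def KatetovLE (I J : Set (Set ℕ)) : Prop :=
  ∃ f : ℕ → ℕ, ∀ C ∈ I, f ⁻¹' C ∈ J

/-- Given a sequence `b` and an increasing sequence `m` of naturals, the sequence `b^M`,
whose `n`-th term is `k·bₙ` where `k` is the number of indices `j` with `m j ≤ n`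
(and `bₙ` itself if `n` is below all of `m`). -/
def seqM (b : ℕ → ℝ) (m : ℕ → ℕ) (n : ℕ) : ℝ :=
  ((max 1 (((Finset.range (n + 1)).filter fun j => m j ≤ n).card) : ℕ) : ℝ) * b n

/-- An admissible `n`-tuple of nonoverlapping closed subintervals of `[0,1]`. -/
def NonoverlappingFin {n : ℕ} (s t : Fin n → ℝ) : Prop :=
  (∀ i, 0 ≤ s i ∧ s i ≤ t i ∧ t i ≤ 1) ∧
  Pairwise fun i j => Disjoint (Set.Ioo (s i) (t i)) (Set.Ioo (s j) (t j))

/-- The modulus of variation of Chanturia: `v(x,n)` is the supremum of `∑_{k=1}^n |x(I_k)|`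
over all `n`-tuples of nonoverlapping closed subintervals of `[0,1]`. -/
noncomputable def modVar (x : ℝ → ℝ) (n : ℕ) : ℝ≥0∞ :=
  ⨆ p : {p : (Fin n → ℝ) × (Fin n → ℝ) // NonoverlappingFin p.1 p.2},
    ENNReal.ofReal (∑ i, |x (p.1.2 i) - x (p.1.1 i)|)

/-- Membership in the Chanturia class `V[g(n)]`: `x` is bounded and `v(x,n) = O(g(n))`. -/
def MemChanturia (g : ℕ → ℝ) (x : ℝ → ℝ) : Prop :=
  BoundedOn01 x ∧ ∃ η : ℝ, 0 < η ∧ ∀ n, modVar x n ≤ ENNReal.ofReal (η * g n)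

/-- The norm `‖x‖_{φ_g} = |x(0)| + sup_n v(x,n)/g(n)` of the Chanturia class. -/
noncomputable def eNormChan (g : ℕ → ℝ) (x : ℝ → ℝ) : ℝ≥0∞ :=
  ENNReal.ofReal |x 0| + ⨆ n, modVar x n / ENNReal.ofReal (g n)

/-- The family `𝒢`: positive, nondecreasing `g` tending to `∞` with `n/g(n)`
nondecreasing and tending to `∞`. -/
def MemG (g : ℕ → ℝ) : Prop :=
  (∀ n, 0 < g n) ∧ Monotone g ∧ Tendsto g atTop atTop ∧
  Monotone (fun n : ℕ => (n : ℝ) / g n) ∧ Tendsto (fun n : ℕ => (n : ℝ) / g n) atTop atTop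

/-- `K` is a bounded subset of the Chanturia class `V[g(n)]`. -/
def BddInChan (g : ℕ → ℝ) (K : Set (ℝ → ℝ)) : Prop :=
  ∃ M : ℝ≥0∞, M < ⊤ ∧ ∀ x ∈ K, eNormChan g x ≤ M

/-- `K` is relatively compact in the norm of the Chanturia class `V[h(n)]`. -/
def RelCompChan (h : ℕ → ℝ) (K : Set (ℝ → ℝ)) : Prop :=
  ∀ u : ℕ → ℝ → ℝ, (∀ j, u j ∈ K) →
    ∃ φ : ℕ → ℕ, StrictMono φ ∧ ∃ x : ℝ → ℝ, MemChanturia h x ∧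
      Tendsto (fun k => eNormChan h (u (φ k) - x)) atTop (nhds 0)

/-- The compact-embedding property from `V[g(n)]` into `V[h(n)]`. -/
def CompactEmbeddingChan (g h : ℕ → ℝ) : Prop :=
  ∀ K : Set (ℝ → ℝ), (∀ x ∈ K, MemChanturia g x) → BddInChan g K → RelCompSup K →
    (∀ x ∈ K, MemChanturia h x) ∧ RelCompChan h K

/-- The submeasure `φ_g(C) = sup_n |C ∩ {0,…,n}| / g(n)`, with values in `[0,∞]`. -/
noncomputable def phiSub (g : ℕ → ℝ) (C : Set ℕ) : ℝ≥0∞ :=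
  ⨆ n, ENNReal.ofReal (((C ∩ Set.Iic n).ncard : ℝ) / g n)

/-- The exhaustive ideal `Exh(φ_g)`. -/
def Exh (g : ℕ → ℝ) : Set (Set ℕ) :=
  {C : Set ℕ | Tendsto (fun k => phiSub g (C \ Set.Iic k)) atTop (nhds 0)}

/-- The characteristic function of `[0,t]`. -/
noncomputable def chi (t : ℝ) : ℝ → ℝ := Set.indicator (Set.Icc 0 t) fun _ => 1

/-!
`(b ⇒ a)`: on a set bounded in `V[g(n)]` one has `v(x,n) ≤ M g(n)` uniformly, and this bound
survives uniform limits. For the difference `d` of a uniformly convergent subsequence and its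
limit, `v(d,n)/h(n) ≤ 2M g(n)/h(n)` is small for large `n`, while for the finitely many small `n`
one has `v(d,n) ≤ 2n‖d‖_∞ → 0`.

`(a ⇒ b)`: if `g(ν) ≥ c h(ν)` along `ν = ν_j → ∞`, the functions equal to `g(ν)/ν` at the `ν`
midpoints `(2i+1)/(2ν)` and `0` elsewhere satisfy `v(·,n) ≤ 2g(n)` (as `n/g(n)` is nondecreasing)
and tend uniformly to `0`, yet `v(·,ν)/h(ν) ≥ c`; so no subsequence converges in `V[h(n)]`.

`(b ⇒ c)`: choose `m_k` with `(k+1) g ≤ h` beyond `m_k`; then `g^M ≤ h` eventually.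

`(c ⇒ b)`: if `g(N) > c h(N)` infinitely often, take very sparse such `N_i` and let `C` be the
union of the blocks `(N_i - ⌈h(N_i)⌉, N_i]`. Each block has `φ_h`-mass at least `1`, so
`C ∉ Exh(φ_h)`. Up to a point `n` of the `i`-th block, `C` has at most `g(n)` elements in the
earlier blocks (by sparseness) and at most `(4/c) g(n)` in the `i`-th one (as `g(2n) ≤ 2g(n)`),
while `g^M(n) ≥ (i+1) g(n)`; so `C ∈ Exh(φ_{g^M})`.
-/

lemma Asymptotics.IsLittleO.eventually_le_mul {α : Type*} {l : Filter α} {g h : α → ℝ}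
    (hgh : g =o[l] h) (hh : ∀ x, 0 ≤ h x) {c : ℝ} (hc : 0 < c) : ∀ᶠ x in l, g x ≤ c * h x :=
  (hgh.def hc).mono fun x hx => (Real.le_norm_self _).trans (Real.norm_of_nonneg (hh x) ▸ hx)

lemma exists_frequently_lt_of_not_isLittleO {α : Type*} {l : Filter α} {g h : α → ℝ}
    (hg : ∀ x, 0 ≤ g x) (hh : ∀ x, 0 ≤ h x) (hgh : ¬ g =o[l] h) :
    ∃ c > 0, ∃ᶠ x in l, c * h x < g x := by
  rw [Asymptotics.isLittleO_iff] at hgh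
  obtain ⟨c, hc, hnot⟩ := not_forall₂.1 hgh
  refine ⟨c, hc, (not_eventually.1 hnot).mono fun x hx => ?_⟩
  rw [Real.norm_of_nonneg (hg x), Real.norm_of_nonneg (hh x)] at hx
  exact not_le.1 hx

lemma ENNReal.tendsto_nhds_zero_iff_ofReal {α : Type*} {l : Filter α} {u : α → ℝ≥0∞} :
    Tendsto u l (nhds 0) ↔ ∀ ε : ℝ, 0 < ε → ∀ᶠ x in l, u x ≤ ENNReal.ofReal ε := by
  rw [ENNReal.tendsto_nhds_zero]
  refine ⟨fun h ε hε => h _ (ENNReal.ofReal_pos.2 hε), fun h ε hε => ?_⟩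
  obtain ⟨r, -, hr0, hrε⟩ := ENNReal.lt_iff_exists_real_btwn.1 hε
  exact (h r (ENNReal.ofReal_pos.1 hr0)).mono fun x hx => hx.trans hrε.le

lemma exists_le_lt_succ_of_strictMono {a : ℕ → ℕ} (ha : StrictMono a) {n : ℕ} (hn : a 0 ≤ n) :
    ∃ i, a i ≤ n ∧ n < a (i + 1) := by
  classical
  have hex : ∃ k, n < a k := ⟨n + 1, Nat.lt_of_lt_of_le n.lt_succ_self (ha.id_le _)⟩
  obtain ⟨i, hi⟩ := Nat.exists_eq_add_one_of_ne_zero fun h0 : Nat.find hex = 0 =>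
    (Nat.find_spec hex).not_ge (h0 ▸ hn)
  exact ⟨i, not_lt.1 (Nat.find_min hex (by omega)), hi ▸ Nat.find_spec hex⟩

lemma exists_seq_of_frequently {p : ℕ → Prop} (hp : ∃ᶠ n in atTop, p n) (F : ℕ → ℕ → ℕ) :
    ∃ N : ℕ → ℕ, (∀ i, p (N i)) ∧ ∀ i, F i (N i) ≤ N (i + 1) := by
  choose pick hpick using fun b => frequently_atTop.1 hp b
  let N : ℕ → ℕ := fun i => Nat.rec (pick 0) (fun i Ni => pick (F i Ni)) i
  refine ⟨N, fun i => ?_, fun i => (hpick _).1⟩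
  cases i <;> exact (hpick _).2

namespace MemG

variable {g : ℕ → ℝ}

lemma mul_apply_le_mul_apply (hg : MemG g) {n N : ℕ} (hnN : n ≤ N) : (n : ℝ) * g N ≤ N * g n := by
  have := hg.2.2.2.1 hnN
  rwa [div_le_div_iff₀ (hg.1 n) (hg.1 N)] at this

lemma le_two_mul_of_le_two_mul (hg : MemG g) {n N : ℕ} (hN : N ≤ 2 * n) : g N ≤ 2 * g n := by
  rcases le_or_gt N n with hNn | hnN
  · linarith [hg.2.1 hNn, hg.1 n]
  · have hn : (0 : ℝ) < n := by exact_mod_cast (show 0 < n by omega)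
    have hN' : (N : ℝ) ≤ 2 * n := by exact_mod_cast hN
    nlinarith [hg.mul_apply_le_mul_apply hnN.le, hg.1 n]

end MemG

lemma NonoverlappingFin.mem_Icc {n : ℕ} {s t : Fin n → ℝ} (hp : NonoverlappingFin s t) (i : Fin n) :
    s i ∈ Icc (0 : ℝ) 1 ∧ t i ∈ Icc (0 : ℝ) 1 := by
  obtain ⟨h0, h1, h2⟩ := hp.1 i
  exact ⟨⟨h0, h1.trans h2⟩, ⟨h0.trans h1, h2⟩⟩

section modVar

variable {x y z : ℝ → ℝ} {n : ℕ}

lemma ofReal_sum_le_modVar {s t : Fin n → ℝ} (hp : NonoverlappingFin s t) :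
    ENNReal.ofReal (∑ i, |x (t i) - x (s i)|) ≤ modVar x n :=
  le_iSup_of_le ⟨(s, t), hp⟩ le_rfl

lemma modVar_le_ofReal {B : ℝ}
    (hB : ∀ s t : Fin n → ℝ, NonoverlappingFin s t → ∑ i, |x (t i) - x (s i)| ≤ B) :
    modVar x n ≤ ENNReal.ofReal B :=
  iSup_le fun p => ENNReal.ofReal_le_ofReal (hB _ _ p.2)

lemma modVar_le_mul {β : ℝ} (hx : ∀ s ∈ Icc (0 : ℝ) 1, ∀ t ∈ Icc (0 : ℝ) 1, |x t - x s| ≤ β) :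
    modVar x n ≤ ENNReal.ofReal (n * β) :=
  modVar_le_ofReal fun s t hp => by
    simpa using Finset.sum_le_sum fun i (_ : i ∈ Finset.univ) =>
      hx _ (hp.mem_Icc i).1 _ (hp.mem_Icc i).2

lemma modVar_le_add_of_abs_sub_le
    (hxyz : ∀ s ∈ Icc (0 : ℝ) 1, ∀ t ∈ Icc (0 : ℝ) 1, |x t - x s| ≤ |y t - y s| + |z t - z s|) :
    modVar x n ≤ modVar y n + modVar z n := by
  refine iSup_le fun ⟨(s, t), hp⟩ => ?_
  calc ENNReal.ofReal (∑ i, |x (t i) - x (s i)|)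
      ≤ ENNReal.ofReal ((∑ i, |y (t i) - y (s i)|) + ∑ i, |z (t i) - z (s i)|) := by
        rw [← Finset.sum_add_distrib]
        exact ENNReal.ofReal_le_ofReal (Finset.sum_le_sum fun i _ =>
          hxyz _ (hp.mem_Icc i).1 _ (hp.mem_Icc i).2)
    _ ≤ _ := ENNReal.ofReal_add_le.trans
        (add_le_add (ofReal_sum_le_modVar hp) (ofReal_sum_le_modVar hp))

lemma modVar_sub_le : modVar (x - y) n ≤ modVar x n + modVar y n :=
  modVar_le_add_of_abs_sub_le fun s _ t _ => by
    simpa only [Pi.sub_apply, sub_sub_sub_comm] using abs_sub (x t - x s) (y t - y s)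

lemma modVar_le_sub_add : modVar x n ≤ modVar (x - y) n + modVar y n :=
  modVar_le_add_of_abs_sub_le fun s _ t _ => by
    simpa only [Pi.sub_apply, sub_sub_sub_comm, sub_add_cancel] using
      abs_add_le ((x t - y t) - (x s - y s)) (y t - y s)

end modVar

section eSupNorm

variable {x y : ℝ → ℝ}

lemma ofReal_abs_le_eSupNorm {t : ℝ} (ht : t ∈ Icc (0 : ℝ) 1) :
    ENNReal.ofReal |x t| ≤ eSupNorm x :=
  le_iSup₂_of_le t ht le_rfl

lemma eSupNorm_le_ofReal {δ : ℝ} (hx : ∀ t ∈ Icc (0 : ℝ) 1, |x t| ≤ δ) :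
    eSupNorm x ≤ ENNReal.ofReal δ :=
  iSup₂_le fun t ht => ENNReal.ofReal_le_ofReal (hx t ht)

lemma abs_le_of_eSupNorm_le {δ : ℝ} (hδ : 0 ≤ δ) (hx : eSupNorm x ≤ ENNReal.ofReal δ) {t : ℝ}
    (ht : t ∈ Icc (0 : ℝ) 1) : |x t| ≤ δ :=
  (ENNReal.ofReal_le_ofReal_iff hδ).1 ((ofReal_abs_le_eSupNorm ht).trans hx)

lemma eSupNorm_zero : eSupNorm 0 = 0 := by
  simp [eSupNorm]

lemma eSupNorm_sub_comm : eSupNorm (x - y) = eSupNorm (y - x) := by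
  simp only [eSupNorm, Pi.sub_apply, abs_sub_comm]

lemma eSupNorm_le_sub_add : eSupNorm x ≤ eSupNorm (x - y) + eSupNorm y :=
  iSup₂_le fun t ht => by
    calc ENNReal.ofReal |x t| ≤ ENNReal.ofReal (|(x - y) t| + |y t|) :=
          ENNReal.ofReal_le_ofReal (by simpa using abs_add_le (x t - y t) (y t))
      _ ≤ _ := ENNReal.ofReal_add_le.trans
          (add_le_add (ofReal_abs_le_eSupNorm ht) (ofReal_abs_le_eSupNorm ht))

lemma modVar_le_of_eSupNorm_le {δ : ℝ} (hδ : 0 ≤ δ) (hx : eSupNorm x ≤ ENNReal.ofReal δ) (n : ℕ) :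
    modVar x n ≤ ENNReal.ofReal (n * (2 * δ)) :=
  modVar_le_mul fun s hs t ht => (abs_sub _ _).trans (by
    linarith [abs_le_of_eSupNorm_le hδ hx hs, abs_le_of_eSupNorm_le hδ hx ht])

lemma eSupNorm_le_abs_add_modVar_one : eSupNorm x ≤ ENNReal.ofReal |x 0| + modVar x 1 := by
  refine iSup₂_le fun t ht => ?_
  have hp : NonoverlappingFin (fun _ : Fin 1 => (0 : ℝ)) fun _ => t :=
    ⟨fun _ => ⟨le_rfl, ht.1, ht.2⟩, fun i j hij => absurd (Subsingleton.elim i j) hij⟩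
  calc ENNReal.ofReal |x t| ≤ ENNReal.ofReal (|x 0| + |x t - x 0|) :=
        ENNReal.ofReal_le_ofReal (by simpa using abs_add_le (x 0) (x t - x 0))
    _ ≤ _ := ENNReal.ofReal_add_le.trans
        (add_le_add le_rfl (by simpa using ofReal_sum_le_modVar (x := x) hp))

lemma modVar_le_of_tendsto_eSupNorm {u : ℕ → ℝ → ℝ} {n : ℕ} {B : ℝ≥0∞}
    (hu : ∀ k, modVar (u k) n ≤ B) (hux : Tendsto (fun k => eSupNorm (u k - x)) atTop (nhds 0)) :
    modVar x n ≤ B := by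
  refine ENNReal.le_of_forall_pos_le_add fun ε hε _ => ?_
  have hδ : (0 : ℝ) < ε / (2 * n + 1) := by positivity
  obtain ⟨k, hk⟩ := (ENNReal.tendsto_nhds_zero_iff_ofReal.1 hux _ hδ).exists
  rw [eSupNorm_sub_comm] at hk
  calc modVar x n ≤ modVar (x - u k) n + modVar (u k) n := modVar_le_sub_add
    _ ≤ ENNReal.ofReal (n * (2 * (ε / (2 * n + 1)))) + B :=
        add_le_add (modVar_le_of_eSupNorm_le hδ.le hk n) (hu k)
    _ ≤ ENNReal.ofReal ε + B := by
        gcongr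
        rw [← mul_assoc, mul_div_assoc', div_le_iff₀ (by positivity)]
        nlinarith [ε.2]
    _ = B + ε := by rw [ENNReal.ofReal_coe_nnreal, add_comm]

end eSupNorm

section eNormChan

variable {h : ℕ → ℝ} {x : ℝ → ℝ}

lemma modVar_div_le_eNormChan (n : ℕ) : modVar x n / ENNReal.ofReal (h n) ≤ eNormChan h x :=
  (le_iSup (fun n => modVar x n / ENNReal.ofReal (h n)) n).trans le_add_self

lemma modVar_le_eNormChan_mul {n : ℕ} (hn : 0 < h n) :
    modVar x n ≤ eNormChan h x * ENNReal.ofReal (h n) :=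
  (ENNReal.div_le_iff_le_mul (Or.inl (ENNReal.ofReal_pos.2 hn).ne')
    (Or.inl ENNReal.ofReal_ne_top)).1 (modVar_div_le_eNormChan n)

lemma eNormChan_le_ofReal (hh : ∀ n, 0 < h n) {a η : ℝ} (hx0 : |x 0| ≤ a) (hη : 0 ≤ η)
    (hx : ∀ n, modVar x n ≤ ENNReal.ofReal (η * h n)) :
    eNormChan h x ≤ ENNReal.ofReal a + ENNReal.ofReal η :=
  add_le_add (ENNReal.ofReal_le_ofReal hx0) <| iSup_le fun n => by
    rw [ENNReal.div_le_iff_le_mul (Or.inl (ENNReal.ofReal_pos.2 (hh n)).ne')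
      (Or.inl ENNReal.ofReal_ne_top), ← ENNReal.ofReal_mul hη]
    exact hx n

lemma eSupNorm_le_mul_eNormChan (h1 : 0 < h 1) :
    eSupNorm x ≤ (1 + ENNReal.ofReal (h 1)) * eNormChan h x :=
  calc eSupNorm x ≤ ENNReal.ofReal |x 0| + modVar x 1 := eSupNorm_le_abs_add_modVar_one
    _ ≤ eNormChan h x + eNormChan h x * ENNReal.ofReal (h 1) :=
        add_le_add le_self_add (modVar_le_eNormChan_mul h1)
    _ = (1 + ENNReal.ofReal (h 1)) * eNormChan h x := by ring

lemma tendsto_eSupNorm_of_tendsto_eNormChan (h1 : 0 < h 1) {u : ℕ → ℝ → ℝ}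
    (hu : Tendsto (fun k => eNormChan h (u k)) atTop (nhds 0)) :
    Tendsto (fun k => eSupNorm (u k)) atTop (nhds 0) := by
  have := ENNReal.Tendsto.const_mul (a := 1 + ENNReal.ofReal (h 1)) hu
    (Or.inr (ENNReal.add_ne_top.2 ⟨ENNReal.one_ne_top, ENNReal.ofReal_ne_top⟩))
  rw [mul_zero] at this
  exact tendsto_of_tendsto_of_tendsto_of_le_of_le tendsto_const_nhds this (fun _ => zero_le)
    fun _ => eSupNorm_le_mul_eNormChan h1

end eNormChan

lemma tendsto_eNormChan_of_tendsto_eSupNorm {g h : ℕ → ℝ} (hh : ∀ n, 0 < h n) (hhm : Monotone h)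
    (hgh : g =o[atTop] h) {b : ℝ} (hb : 0 ≤ b) {d : ℕ → ℝ → ℝ}
    (hdvar : ∀ k n, modVar (d k) n ≤ ENNReal.ofReal (b * g n))
    (hd : Tendsto (fun k => eSupNorm (d k)) atTop (nhds 0)) :
    Tendsto (fun k => eNormChan h (d k)) atTop (nhds 0) := by
  rw [ENNReal.tendsto_nhds_zero_iff_ofReal]
  intro ε hε
  obtain ⟨N, hN⟩ := eventually_atTop.1
    (hgh.eventually_le_mul (fun n => (hh n).le) (by positivity : 0 < ε / 2 / (b + 1)))
  set δ := min (ε / 2) (ε * h 0 / (4 * N + 1))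
  have hδ : 0 < δ := lt_min (by positivity) (by have := hh 0; positivity)
  filter_upwards [ENNReal.tendsto_nhds_zero_iff_ofReal.1 hd δ hδ] with k hk
  rw [← add_halves ε, ENNReal.ofReal_add (by positivity) (by positivity)]
  refine eNormChan_le_ofReal hh ((abs_le_of_eSupNorm_le hδ.le hk ⟨le_rfl, zero_le_one⟩).trans
    (min_le_left _ _)) (by positivity) fun n => ?_
  rcases le_or_gt N n with hNn | hnN
  · refine (hdvar k n).trans (ENNReal.ofReal_le_ofReal ?_)
    calc b * g n ≤ b * (ε / 2 / (b + 1) * h n) := mul_le_mul_of_nonneg_left (hN n hNn) hb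
      _ ≤ ε / 2 * h n := by
          rw [← mul_assoc]
          refine mul_le_mul_of_nonneg_right ?_ (hh n).le
          rw [mul_div_assoc', div_le_iff₀ (by positivity)]
          nlinarith
  · refine (modVar_le_of_eSupNorm_le hδ.le hk n).trans (ENNReal.ofReal_le_ofReal ?_)
    have h1 : (n : ℝ) ≤ N := by exact_mod_cast hnN.le
    have h2 : δ * (4 * N + 1) ≤ ε * h 0 :=
      (le_div_iff₀ (by positivity)).1 (min_le_right (ε / 2) (ε * h 0 / (4 * N + 1)))
    nlinarith [hhm (Nat.zero_le n), hh 0]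

lemma compactEmbeddingChan_of_isLittleO {g h : ℕ → ℝ} (hg : ∀ n, 0 < g n) (hh : ∀ n, 0 < h n)
    (hhm : Monotone h) (hgh : g =o[atTop] h) :
    CompactEmbeddingChan g h := by
  intro K hKg ⟨M, hM, hKM⟩ hKsup
  obtain ⟨C, hC, hgC⟩ :=
    Asymptotics.bound_of_isBigO_cofinite (Nat.cofinite_eq_atTop ▸ hgh.isBigO)
  replace hgC : ∀ n, g n ≤ C * h n := fun n =>
    (Real.le_norm_self _).trans (Real.norm_of_nonneg (hh n).le ▸ hgC (hh n).ne')
  set B := M.toReal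
  have hB : 0 ≤ B := ENNReal.toReal_nonneg
  have hKvar : ∀ x ∈ K, ∀ n, modVar x n ≤ ENNReal.ofReal (B * g n) := fun x hx n => by
    rw [ENNReal.ofReal_mul hB, ENNReal.ofReal_toReal hM.ne]
    exact (modVar_le_eNormChan_mul (hg n)).trans (mul_le_mul_left (hKM x hx) _)
  have hmem : ∀ x, BoundedOn01 x → (∀ n, modVar x n ≤ ENNReal.ofReal (B * g n)) →
      MemChanturia h x := fun x hxb hx =>
    ⟨hxb, B * C + 1, by positivity, fun n => (hx n).trans (ENNReal.ofReal_le_ofReal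
      (by nlinarith [hgC n, hh n, mul_le_mul_of_nonneg_left (hgC n) hB]))⟩
  refine ⟨fun x hx => hmem x (hKg x hx).1 (hKvar x hx), fun u hu => ?_⟩
  obtain ⟨φ, hφ, x, hxb, hux⟩ := hKsup u hu
  have hxvar : ∀ n, modVar x n ≤ ENNReal.ofReal (B * g n) := fun n =>
    modVar_le_of_tendsto_eSupNorm (fun k => hKvar _ (hu (φ k)) n) hux
  refine ⟨φ, hφ, x, hmem x hxb hxvar, tendsto_eNormChan_of_tendsto_eSupNorm hh hhm hgh
    (b := 2 * B) (by positivity) (fun k n => ?_) hux⟩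
  have hBg : 0 ≤ B * g n := mul_nonneg hB (hg n).le
  calc modVar (u (φ k) - x) n ≤ modVar (u (φ k)) n + modVar x n := modVar_sub_le
    _ ≤ ENNReal.ofReal (B * g n) + ENNReal.ofReal (B * g n) :=
        add_le_add (hKvar _ (hu (φ k)) n) (hxvar n)
    _ = ENNReal.ofReal (2 * B * g n) := by rw [← ENNReal.ofReal_add hBg hBg]; ring_nf

lemma modVar_le_of_eq_zero_off {x : ℝ → ℝ} {P : Finset ℝ} {α : ℝ}
    (hα : ∀ s t, |x t - x s| ≤ α) (hP : ∀ t ∉ P, x t = 0) (N : ℕ) :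
    modVar x N ≤ ENNReal.ofReal (2 * P.card * α) := by
  classical
  refine modVar_le_ofReal fun s t hp => ?_
  set T := Finset.univ.filter fun i => |x (t i) - x (s i)| ≠ 0
  have hT : ∀ i ∈ T, x (t i) ≠ x (s i) := fun i hi =>
    sub_ne_zero.1 (abs_ne_zero.1 (Finset.mem_filter.1 hi).2)
  have hlt : ∀ i ∈ T, s i < t i := fun i hi =>
    (hp.1 i).2.1.lt_of_ne fun hst => hT i hi (by rw [hst])
  -- an interval on which `x` moves has an endpoint in `P`, and nonoverlapping intervals
  -- with nonempty interiors cannot share a left or a right endpoint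
  let F : Fin N → ℝ × Bool := fun i => if t i ∈ P then (t i, true) else (s i, false)
  have hmaps : Set.MapsTo F T ↑(P ×ˢ (Finset.univ : Finset Bool)) := fun i hi => by
    by_cases hti : t i ∈ P
    · simp [F, hti]
    · have hsi : s i ∈ P := by
        by_contra hsi
        exact hT i hi (by rw [hP _ hti, hP _ hsi])
      simp [F, hti, hsi]
  have hinj : Set.InjOn F T := fun i hi j hj hF => by
    by_contra hne
    have hd := Set.Ioo_disjoint_Ioo.1 (hp.2 hne)
    have := hlt i hi
    have := hlt j hj
    simp only [F] at hF
    split_ifs at hF <;> simp only [Prod.mk.injEq, Bool.true_eq_false, Bool.false_eq_true,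
      and_false, and_true] at hF <;>
      rcases min_le_iff.1 hd with h | h <;> rcases le_max_iff.1 h with h | h <;> linarith
  have hcard : T.card ≤ 2 * P.card := by
    simpa [mul_comm] using Finset.card_le_card_of_injOn F hmaps hinj
  calc ∑ i, |x (t i) - x (s i)| = ∑ i ∈ T, |x (t i) - x (s i)| :=
        (Finset.sum_filter_ne_zero _).symm
    _ ≤ T.card • α := Finset.sum_le_card_nsmul _ _ _ fun i _ => hα _ _
    _ ≤ 2 * P.card * α := by
        rw [nsmul_eq_mul]
        exact mul_le_mul_of_nonneg_right (by exact_mod_cast hcard) ((abs_nonneg _).trans (hα 0 0))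

noncomputable def spike (n : ℕ) (α : ℝ) : ℝ → ℝ :=
  (range fun i : Fin n => (2 * i + 1 : ℝ) / (2 * n)).indicator fun _ => α

section spike

variable {n : ℕ} {α : ℝ}

lemma spike_nonneg (hα : 0 ≤ α) (t : ℝ) : 0 ≤ spike n α t :=
  indicator_nonneg (fun _ _ => hα) t

lemma spike_le (hα : 0 ≤ α) (t : ℝ) : spike n α t ≤ α :=
  indicator_le_self' (fun _ _ => hα) t

lemma abs_spike_le (hα : 0 ≤ α) (t : ℝ) : |spike n α t| ≤ α := by
  rw [abs_of_nonneg (spike_nonneg hα t)]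
  exact spike_le hα t

lemma abs_spike_sub_le (hα : 0 ≤ α) (s t : ℝ) : |spike n α t - spike n α s| ≤ α :=
  abs_sub_le_of_nonneg_of_le (spike_nonneg hα t) (spike_le hα t) (spike_nonneg hα s)
    (spike_le hα s)

lemma spike_zero : spike n α 0 = 0 := by
  refine indicator_of_notMem ?_ _
  rintro ⟨i, hi⟩
  have : 0 < n := i.pos
  have : (0 : ℝ) < (2 * i + 1) / (2 * n) := by positivity
  linarith

lemma ofReal_mul_le_modVar_spike (hα : 0 ≤ α) :
    ENNReal.ofReal (n * α) ≤ modVar (spike n α) n := by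
  set s : Fin n → ℝ := fun i => (2 * i) / (2 * n)
  set t : Fin n → ℝ := fun i => (2 * i + 1) / (2 * n)
  have hn : ∀ i : Fin n, (0 : ℝ) < 2 * n := fun i => by have := i.pos; positivity
  have hst : ∀ i j : Fin n, i < j → t i ≤ s j := fun i j hij => by
    have : (2 * i + 1 : ℝ) ≤ 2 * j := by exact_mod_cast (show 2 * (i : ℕ) + 1 ≤ 2 * j by omega)
    exact div_le_div_of_nonneg_right this (hn i).le
  have hp : NonoverlappingFin s t := by
    refine ⟨fun i => ⟨by positivity, div_le_div_of_nonneg_right (by linarith) (hn i).le, ?_⟩,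
      fun i j hij => Set.Ioo_disjoint_Ioo.2 ?_⟩
    · rw [div_le_one (hn i)]
      exact_mod_cast (show 2 * (i : ℕ) + 1 ≤ 2 * n by omega)
    · rcases lt_or_gt_of_ne hij with hij | hij
      · exact (min_le_left _ _).trans ((hst i j hij).trans (le_max_right _ _))
      · exact (min_le_right _ _).trans ((hst j i hij).trans (le_max_left _ _))
  have hval : ∀ i, |spike n α (t i) - spike n α (s i)| = α := fun i => by
    have hs : s i ∉ range fun j : Fin n => (2 * j + 1 : ℝ) / (2 * n) := by
      rintro ⟨j, hj⟩
      rw [div_left_inj' (hn i).ne'] at hj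
      have : 2 * (j : ℕ) + 1 = 2 * i := by exact_mod_cast hj
      omega
    rw [spike, indicator_of_mem (mem_range_self i), indicator_of_notMem hs, sub_zero,
      abs_of_nonneg hα]
  simpa [hval] using ofReal_sum_le_modVar (x := spike n α) hp

lemma modVar_spike_le (hα : 0 ≤ α) (N : ℕ) : modVar (spike n α) N ≤ ENNReal.ofReal (2 * n * α) := by
  classical
  let P : Finset ℝ := Finset.univ.image fun i : Fin n => (2 * i + 1 : ℝ) / (2 * n)
  have hP : P.card ≤ n := Finset.card_image_le.trans (Finset.card_fin n).le
  refine (modVar_le_of_eq_zero_off (P := P) (abs_spike_sub_le hα) (fun t ht => ?_) N).trans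
    (ENNReal.ofReal_le_ofReal (by gcongr))
  refine indicator_of_notMem ?_ _
  rintro ⟨i, hi⟩
  exact ht (Finset.mem_image.2 ⟨i, Finset.mem_univ _, hi⟩)

lemma modVar_spike_le_two_mul {g : ℕ → ℝ} (hg : MemG g) {ν : ℕ} (hν : 0 < ν) (n : ℕ) :
    modVar (spike ν (g ν / ν)) n ≤ ENNReal.ofReal (2 * g n) := by
  have hνR : (0 : ℝ) < ν := Nat.cast_pos.2 hν
  have hα : 0 ≤ g ν / ν := div_nonneg (hg.1 ν).le hνR.le
  rcases le_or_gt n ν with hnν | hνn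
  · refine (modVar_le_mul fun s _ t _ => abs_spike_sub_le hα s t).trans
      (ENNReal.ofReal_le_ofReal ?_)
    rw [mul_div_assoc', div_le_iff₀ hνR]
    nlinarith [hg.mul_apply_le_mul_apply hnν, hg.1 n]
  · refine (modVar_spike_le hα n).trans (ENNReal.ofReal_le_ofReal ?_)
    rw [mul_assoc, mul_div_cancel₀ _ hνR.ne']
    linarith [hg.2.1 hνn.le]

end spike

lemma relCompSup_range_of_tendsto_eSupNorm {X : ℕ → ℝ → ℝ} (hXb : ∀ j, BoundedOn01 (X j))
    (hX : Tendsto (fun j => eSupNorm (X j)) atTop (nhds 0)) : RelCompSup (range X) := by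
  intro u hu
  choose f hf using hu
  by_cases hfin : ∀ i, (f ⁻¹' {i}).Finite
  · have hf' : Tendsto f atTop atTop := by
      rw [← Nat.cofinite_eq_atTop]
      exact Tendsto.cofinite_of_finite_preimage_singleton fun i => (hfin i).to_subtype
    refine ⟨id, strictMono_id, 0, ⟨0, fun _ _ => by simp⟩, ?_⟩
    simpa [← hf, Function.comp_def] using hX.comp hf'
  · obtain ⟨i, hi⟩ := not_forall.1 hfin
    have hnth : ∀ k, f (Nat.nth (f · = i) k) = i := Nat.nth_mem_of_infinite hi
    refine ⟨Nat.nth (f · = i), Nat.nth_strictMono hi, X i, hXb i, ?_⟩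
    simp [← hf, hnth, eSupNorm_zero]

lemma eSupNorm_eq_zero_of_tendsto {u : ℕ → ℝ → ℝ} {y : ℝ → ℝ}
    (huy : Tendsto (fun k => eSupNorm (u k - y)) atTop (nhds 0))
    (hu : Tendsto (fun k => eSupNorm (u k)) atTop (nhds 0)) : eSupNorm y = 0 :=
  le_antisymm (ge_of_tendsto' (by simpa using huy.add hu) fun _ =>
    eSupNorm_le_sub_add.trans_eq (by rw [eSupNorm_sub_comm])) zero_le

lemma modVar_le_modVar_sub {x y : ℝ → ℝ} (hy : eSupNorm y = 0) (n : ℕ) :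
    modVar x n ≤ modVar (x - y) n :=
  calc modVar x n ≤ modVar (x - y) n + modVar y n := modVar_le_sub_add
    _ ≤ modVar (x - y) n + 0 := by
        gcongr
        simpa using modVar_le_of_eSupNorm_le le_rfl (by simp [hy]) n
    _ = modVar (x - y) n := add_zero _

lemma ofReal_div_le_eNormChan_spike_sub {g h : ℕ → ℝ} {ν : ℕ} (hν : 0 < ν) (hgν : 0 ≤ g ν)
    (hhν : 0 < h ν) {y : ℝ → ℝ} (hy : eSupNorm y = 0) :
    ENNReal.ofReal (g ν / h ν) ≤ eNormChan h (spike ν (g ν / ν) - y) :=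
  calc ENNReal.ofReal (g ν / h ν) = ENNReal.ofReal (g ν) / ENNReal.ofReal (h ν) :=
        ENNReal.ofReal_div_of_pos hhν
    _ ≤ modVar (spike ν (g ν / ν) - y) ν / ENNReal.ofReal (h ν) := by
        gcongr
        refine le_of_eq_of_le ?_ ((ofReal_mul_le_modVar_spike (div_nonneg hgν ν.cast_nonneg)).trans
          (modVar_le_modVar_sub hy ν))
        rw [mul_div_cancel₀ _ (Nat.cast_pos.2 hν).ne']
    _ ≤ eNormChan h (spike ν (g ν / ν) - y) := modVar_div_le_eNormChan ν

lemma isLittleO_of_compactEmbeddingChan {g h : ℕ → ℝ} (hg : MemG g) (hh : ∀ n, 0 < h n)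
    (hce : CompactEmbeddingChan g h) : g =o[atTop] h := by
  by_contra hgh
  obtain ⟨c, hc, hfreq⟩ :=
    exists_frequently_lt_of_not_isLittleO (fun n => (hg.1 n).le) (fun n => (hh n).le) hgh
  obtain ⟨ν, hν, hνc⟩ := extraction_of_frequently_atTop
    (hfreq.and_eventually (eventually_gt_atTop 0))
  set α : ℕ → ℝ := fun j => g (ν j) / ν j
  have hα : ∀ j, 0 ≤ α j := fun j => div_nonneg (hg.1 _).le (Nat.cast_nonneg _)
  set X : ℕ → ℝ → ℝ := fun j => spike (ν j) (α j)
  have hXb : ∀ j, BoundedOn01 (X j) := fun j => ⟨α j, fun t _ => abs_spike_le (hα j) t⟩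
  have hXvar : ∀ j n, modVar (X j) n ≤ ENNReal.ofReal (2 * g n) := fun j =>
    modVar_spike_le_two_mul hg (hνc j).2
  have hαlim : Tendsto α atTop (nhds 0) :=
    (hg.2.2.2.2.comp hν.tendsto_atTop).inv_tendsto_atTop.congr fun j => by simp [α]
  have hXlim : Tendsto (fun j => eSupNorm (X j)) atTop (nhds 0) :=
    tendsto_of_tendsto_of_tendsto_of_le_of_le tendsto_const_nhds
      (by simpa using ENNReal.tendsto_ofReal hαlim) (fun _ => zero_le)
      fun j => eSupNorm_le_ofReal fun t _ => abs_spike_le (hα j) t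
  have hKbdd : BddInChan g (range X) := ⟨ENNReal.ofReal 0 + ENNReal.ofReal 2,
    ENNReal.add_lt_top.2 ⟨ENNReal.ofReal_lt_top, ENNReal.ofReal_lt_top⟩,
    forall_mem_range.2 fun j => eNormChan_le_ofReal hg.1 (by simp [X, spike_zero]) zero_le_two
      (hXvar j)⟩
  obtain ⟨-, hrc⟩ := hce (range X) (forall_mem_range.2 fun j => ⟨hXb j, 2, two_pos, hXvar j⟩)
    hKbdd (relCompSup_range_of_tendsto_eSupNorm hXb hXlim)
  obtain ⟨φ, hφ, y, -, hconv⟩ := hrc X fun j => mem_range_self j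
  have hy : eSupNorm y = 0 := eSupNorm_eq_zero_of_tendsto
    (tendsto_eSupNorm_of_tendsto_eNormChan (hh 1) hconv) (hXlim.comp hφ.tendsto_atTop)
  obtain ⟨k, hk⟩ := (ENNReal.tendsto_nhds_zero_iff_ofReal.1 hconv (c / 2) (by positivity)).exists
  have hlow : c ≤ g (ν (φ k)) / h (ν (φ k)) := by
    rw [le_div_iff₀ (hh _)]
    exact (hνc (φ k)).1.le
  have := (ENNReal.ofReal_le_ofReal_iff (by positivity)).1 <|
    ((ENNReal.ofReal_le_ofReal hlow).trans (ofReal_div_le_eNormChan_spike_sub (hνc (φ k)).2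
      (hg.1 _).le (hh _) hy)).trans hk
  linarith

section seqM

variable {g : ℕ → ℝ} {m : ℕ → ℕ} {n i : ℕ}

lemma card_filter_le_of_lt_succ (hm : StrictMono m) (hn : n < m (i + 1)) :
    ((Finset.range (n + 1)).filter fun j => m j ≤ n).card ≤ i + 1 := by
  refine (Finset.card_le_card fun j hj => ?_).trans (Finset.card_range _).le
  have := (Finset.mem_filter.1 hj).2
  exact Finset.mem_range.2 (hm.lt_iff_lt.1 (by omega))

lemma le_card_filter_of_le (hm : StrictMono m) (hi : m i ≤ n) :
    i + 1 ≤ ((Finset.range (n + 1)).filter fun j => m j ≤ n).card := by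
  refine (Finset.card_range _).ge.trans (Finset.card_le_card fun j hj => ?_)
  have hji : j ≤ i := Nat.lt_succ_iff.1 (Finset.mem_range.1 hj)
  have : i ≤ m i := hm.id_le i
  exact Finset.mem_filter.2 ⟨Finset.mem_range.2 (by omega),
    (hm.monotone hji).trans hi⟩

lemma seqM_pos (hgn : 0 < g n) : 0 < seqM g m n :=
  mul_pos (Nat.cast_pos.2 (lt_max_of_lt_left one_pos)) hgn

lemma seqM_le (hm : StrictMono m) (hgn : 0 ≤ g n) (hn : n < m (i + 1)) :
    seqM g m n ≤ (i + 1) * g n := by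
  have := card_filter_le_of_lt_succ hm hn
  unfold seqM
  gcongr
  exact_mod_cast max_le (by omega) this

lemma le_seqM (hm : StrictMono m) (hgn : 0 ≤ g n) (hi : m i ≤ n) :
    (i + 1) * g n ≤ seqM g m n := by
  unfold seqM
  gcongr
  exact_mod_cast (le_card_filter_of_le hm hi).trans (le_max_right _ _)

end seqM

section Exh

variable {g h : ℕ → ℝ}

lemma phiSub_le_ofReal_iff (hg : ∀ n, 0 < g n) {C : Set ℕ} {ε : ℝ} (hε : 0 ≤ ε) :
    phiSub g C ≤ ENNReal.ofReal ε ↔ ∀ n, ((C ∩ Iic n).ncard : ℝ) ≤ ε * g n := by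
  simp only [phiSub, iSup_le_iff, ENNReal.ofReal_le_ofReal_iff hε, div_le_iff₀ (hg _)]

lemma mem_exh_iff (hg : ∀ n, 0 < g n) {C : Set ℕ} :
    C ∈ Exh g ↔ ∀ ε > 0, ∀ᶠ k in atTop, ∀ n, (((C \ Iic k) ∩ Iic n).ncard : ℝ) ≤ ε * g n := by
  simp only [Exh, mem_ofPred_eq, ENNReal.tendsto_nhds_zero_iff_ofReal]
  exact forall₂_congr fun ε hε =>
    eventually_congr (Eventually.of_forall fun k => phiSub_le_ofReal_iff hg hε.le)

lemma diff_Iic_inter_Iic_eq_empty {C : Set ℕ} {k n : ℕ} (hnk : n ≤ k) :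
    (C \ Iic k) ∩ Iic n = ∅ :=
  eq_empty_of_forall_notMem fun _ ⟨⟨_, hek⟩, hen⟩ => hek ((mem_Iic.1 hen).trans hnk)

lemma exh_subset_exh_of_eventually_le (hg : ∀ n, 0 < g n) (hh : ∀ n, 0 < h n)
    (hgh : ∀ᶠ n in atTop, g n ≤ h n) : Exh g ⊆ Exh h := by
  intro C hC
  rw [mem_exh_iff hg] at hC
  rw [mem_exh_iff hh]
  intro ε hε
  obtain ⟨K, hK⟩ := eventually_atTop.1 hgh
  filter_upwards [hC ε hε, eventually_ge_atTop K] with k hk hKk n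
  rcases le_or_gt n k with hnk | hkn
  · rw [diff_Iic_inter_Iic_eq_empty hnk, ncard_empty, Nat.cast_zero]
    exact (mul_pos hε (hh n)).le
  · exact (hk n).trans (mul_le_mul_of_nonneg_left (hK n (by omega)) hε.le)

lemma exists_strictMono_exh_seqM_subset (hg : ∀ n, 0 < g n) (hh : ∀ n, 0 < h n)
    (hgh : g =o[atTop] h) : ∃ m : ℕ → ℕ, StrictMono m ∧ Exh (seqM g m) ⊆ Exh h := by
  obtain ⟨m, hm, hmh⟩ := extraction_forall_of_eventually
    (P := fun i k => ∀ n, k ≤ n → (i + 1) * g n ≤ h n) fun i =>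
    eventually_forall_ge_atTop.2 <| (hgh.eventually_le_mul (fun n => (hh n).le)
      (by positivity : (0 : ℝ) < ((i : ℝ) + 1)⁻¹)).mono fun n hn => by
        rwa [inv_mul_eq_div, le_div_iff₀' (by positivity)] at hn
  refine ⟨m, hm, exh_subset_exh_of_eventually_le (fun n => seqM_pos (hg n)) hh ?_⟩
  filter_upwards [eventually_ge_atTop (m 0)] with n hn
  obtain ⟨i, hi, hi'⟩ := exists_le_lt_succ_of_strictMono hm hn
  exact (seqM_le hm (hg n).le hi').trans (hmh i n hi)

lemma notMem_exh_of_forall_Ioc_subset (hh : ∀ n, 0 < h n) {C : Set ℕ}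
    (hC : ∀ k, ∃ a N : ℕ, k ≤ a ∧ h N ≤ (N - a : ℕ) ∧ Ioc a N ⊆ C) : C ∉ Exh h := by
  rw [mem_exh_iff hh]
  intro hC'
  obtain ⟨k, hk⟩ := (hC' (1 / 2) (by norm_num)).exists
  obtain ⟨a, N, hka, hN, haN⟩ := hC k
  have hsub : Ioc a N ⊆ (C \ Iic k) ∩ Iic N := fun e he =>
    ⟨⟨haN he, fun hek => by simp only [mem_Ioc, mem_Iic] at he hek; omega⟩, he.2⟩
  have hcard : ((N - a : ℕ) : ℝ) ≤ ((C \ Iic k) ∩ Iic N).ncard := by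
    rw [← ncard_Ioc_nat]
    exact_mod_cast ncard_le_ncard hsub ((finite_Iic N).inter_of_right _)
  linarith [hk N, hh N]

end Exh

/-- Block `0` is left out, so that `N i` bounds all the blocks preceding block `i + 1`. -/
def blocks (a N : ℕ → ℕ) : Set ℕ := ⋃ i, Ioc (a (i + 1)) (N (i + 1))

section blocks

variable {a N : ℕ → ℕ}

lemma strictMono_of_le_of_lt_succ (haN : ∀ i, a i ≤ N i) (hNa : ∀ i, N i < a (i + 1)) :
    StrictMono a ∧ StrictMono N :=
  ⟨strictMono_nat_of_lt_succ fun i => (haN i).trans_lt (hNa i),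
    strictMono_nat_of_lt_succ fun i => (hNa i).trans_le (haN (i + 1))⟩

lemma blocks_inter_Iic_subset (haN : ∀ i, a i ≤ N i) (hNa : ∀ i, N i < a (i + 1)) {n i : ℕ}
    (hn : n ≤ a (i + 2)) : blocks a N ∩ Iic n ⊆ Iic (N i) ∪ Ioc (a (i + 1)) (N (i + 1)) := by
  obtain ⟨ha, hN⟩ := strictMono_of_le_of_lt_succ haN hNa
  rintro e ⟨he, hen⟩
  obtain ⟨j, hej⟩ := mem_iUnion.1 he
  rcases lt_trichotomy j i with hji | rfl | hij
  · exact Or.inl (mem_Iic.2 (hej.2.trans (hN.monotone hji)))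
  · exact Or.inr hej
  · have := ha.monotone (show i + 2 ≤ j + 1 by omega)
    have := hej.1
    have := mem_Iic.1 hen
    omega

lemma ncard_blocks_inter_Iic_le (haN : ∀ i, a i ≤ N i) (hNa : ∀ i, N i < a (i + 1)) {n i : ℕ}
    (hn : n ≤ a (i + 2)) : (blocks a N ∩ Iic n).ncard ≤ N i + 1 + (N (i + 1) - a (i + 1)) := by
  refine (ncard_le_ncard (blocks_inter_Iic_subset haN hNa hn)
    ((finite_Iic _).union (finite_Ioc _ _))).trans ((ncard_union_le _ _).trans ?_)
  rw [ncard_Iic_nat, ncard_Ioc_nat]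

lemma exists_index_of_mem_blocks_sdiff (haN : ∀ i, a i ≤ N i) (hNa : ∀ i, N i < a (i + 1))
    {I k e n : ℕ} (hk : N I ≤ k) (he : e ∈ (blocks a N \ Iic k) ∩ Iic n) :
    ∃ i, I ≤ i ∧ a (i + 1) < n ∧ n ≤ a (i + 2) := by
  obtain ⟨ha, hN⟩ := strictMono_of_le_of_lt_succ haN hNa
  obtain ⟨⟨he, hek⟩, hen⟩ := he
  obtain ⟨j, hej, hejN⟩ := mem_iUnion.1 he
  simp only [mem_Iic, not_le] at hek hen
  have hIj : I < j + 1 := hN.lt_iff_lt.1 (by omega)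
  have ha1 : a 1 ≤ a (j + 1) := ha.monotone (by omega)
  obtain ⟨i, hi, hi'⟩ : ∃ i, a (i + 1) ≤ n - 1 ∧ n - 1 < a (i + 2) :=
    exists_le_lt_succ_of_strictMono (a := fun i => a (i + 1))
      (ha.comp (strictMono_id.add_const 1)) (n := n - 1) (by simp only [zero_add]; omega)
  have hji : j ≤ i := by
    by_contra! hij
    have := ha.monotone (show i + 2 ≤ j + 1 by omega)
    omega
  exact ⟨i, by omega, by omega, by omega⟩

end blocks

lemma blocks_mem_exh_seqM {g : ℕ → ℝ} (hg : MemG g) {m a N : ℕ → ℕ} (hm : StrictMono m)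
    {D : ℝ} (hD : 0 ≤ D) (haN : ∀ i, a i ≤ N i) (hNa : ∀ i, N i < a (i + 1))
    (hN2a : ∀ i, N i ≤ 2 * a i) (hma : ∀ i, m (i + 1) ≤ a (i + 1))
    (hgN : ∀ i, (N i + 1 : ℝ) ≤ g (a (i + 1))) (hlen : ∀ i, ((N i - a i : ℕ) : ℝ) ≤ D * g (N i)) :
    blocks a N ∈ Exh (seqM g m) := by
  rw [mem_exh_iff fun n => seqM_pos (hg.1 n)]
  intro ε hε
  obtain ⟨I, hI⟩ := exists_nat_ge ((1 + 2 * D) / ε)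
  rw [div_le_iff₀ hε] at hI
  filter_upwards [eventually_ge_atTop (N I)] with k hk n
  rcases ((blocks a N \ Iic k) ∩ Iic n).eq_empty_or_nonempty with hS | ⟨e, he⟩
  · rw [hS, ncard_empty, Nat.cast_zero]
    exact (mul_pos hε (seqM_pos (hg.1 n))).le
  obtain ⟨i, hIi, hin, hni⟩ := exists_index_of_mem_blocks_sdiff haN hNa hk he
  have hcount : (((blocks a N \ Iic k) ∩ Iic n).ncard : ℝ) ≤
      N i + 1 + ((N (i + 1) - a (i + 1) : ℕ) : ℝ) := by
    exact_mod_cast (ncard_le_ncard (inter_subset_inter_left _ sdiff_subset)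
      ((finite_Iic n).inter_of_right _)).trans (ncard_blocks_inter_Iic_le haN hNa hni)
  have hprev : (N i + 1 : ℝ) ≤ g n := (hgN i).trans (hg.2.1 hin.le)
  have hcur : ((N (i + 1) - a (i + 1) : ℕ) : ℝ) ≤ D * (2 * g n) :=
    (hlen (i + 1)).trans (mul_le_mul_of_nonneg_left
      (hg.le_two_mul_of_le_two_mul ((hN2a (i + 1)).trans (by omega))) hD)
  have hmult : ((i + 1 : ℕ) + 1 : ℝ) * g n ≤ seqM g m n :=
    le_seqM hm (hg.1 n).le ((hma i).trans hin.le)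
  have hIi' : (I : ℝ) ≤ i + 1 + 1 := by exact_mod_cast (by omega : I ≤ i + 1 + 1)
  push_cast at hmult
  calc _ ≤ (1 + 2 * D) * g n := by linarith
    _ ≤ (I * ε) * g n := by gcongr; exact (hg.1 n).le
    _ ≤ ε * ((i + 1 + 1) * g n) := by rw [mul_comm (I : ℝ), mul_assoc]; gcongr; exact (hg.1 n).le
    _ ≤ ε * seqM g m n := by gcongr

lemma exists_sparse_blocks {g h : ℕ → ℝ} (hg : Tendsto g atTop atTop) (hh : MemG h) {c : ℝ}
    (hc : 0 < c) (hfreq : ∃ᶠ n in atTop, c * h n < g n) (m : ℕ → ℕ) :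
    ∃ a N : ℕ → ℕ, (∀ i, a i ≤ N i ∧ N i ≤ 2 * a i ∧ N i < a (i + 1)) ∧
      (∀ i, m (i + 1) ≤ a (i + 1) ∧ (N i + 1 : ℝ) ≤ g (a (i + 1))) ∧
      ∀ i, h (N i) ≤ ((N i - a i : ℕ) : ℝ) ∧ ((N i - a i : ℕ) : ℝ) ≤ 2 / c * g (N i) := by
  have hlarge : ∀ᶠ n : ℕ in atTop, 1 ≤ h n ∧ 4 * h n ≤ n := by
    filter_upwards [hh.2.2.1.eventually_ge_atTop 1, hh.2.2.2.2.eventually_ge_atTop 4]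
      with n h1 h4
    exact ⟨h1, by rwa [le_div_iff₀ (hh.1 n)] at h4⟩
  choose G hG using fun T : ℕ => eventually_atTop.1 (hg.eventually_ge_atTop (T : ℝ))
  obtain ⟨N, hNp, hNF⟩ := exists_seq_of_frequently (hfreq.and_eventually hlarge)
    fun i Ni => 2 * (Ni + m (i + 1) + G (Ni + 1) + 1)
  refine ⟨fun i => N i - ⌈h (N i)⌉₊, N, ?_⟩
  have hlen : ∀ i, h (N i) ≤ ⌈h (N i)⌉₊ ∧ (⌈h (N i)⌉₊ : ℝ) ≤ 2 / c * g (N i) ∧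
      2 * ⌈h (N i)⌉₊ ≤ N i := fun i => by
    obtain ⟨hcg, h1, h4⟩ := hNp i
    have hceil : (⌈h (N i)⌉₊ : ℝ) < h (N i) + 1 := Nat.ceil_lt_add_one (by linarith)
    have hhg : h (N i) ≤ g (N i) / c := by rw [le_div_iff₀' hc]; exact hcg.le
    refine ⟨Nat.le_ceil _, ?_, by exact_mod_cast (by linarith : (2 * ⌈h (N i)⌉₊ : ℝ) ≤ N i)⟩
    rw [div_mul_eq_mul_div, mul_div_assoc]
    linarith
  have hsub : ∀ i, N i - (N i - ⌈h (N i)⌉₊) = ⌈h (N i)⌉₊ := fun i => by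
    have := (hlen i).2.2
    omega
  refine ⟨fun i => ?_, fun i => ?_, fun i => by simpa only [hsub] using ⟨(hlen i).1, (hlen i).2.1⟩⟩
  all_goals
    dsimp only
    have := hNF i
    have := (hlen i).2.2
    have := (hlen (i + 1)).2.2
  · omega
  · refine ⟨by omega, ?_⟩
    exact_mod_cast hG (N i + 1) _ (by omega)

lemma isLittleO_of_exh_seqM_subset {g h : ℕ → ℝ} (hg : MemG g) (hh : MemG h) {m : ℕ → ℕ}
    (hm : StrictMono m) (hsub : Exh (seqM g m) ⊆ Exh h) : g =o[atTop] h := by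
  by_contra hgh
  obtain ⟨c, hc, hfreq⟩ :=
    exists_frequently_lt_of_not_isLittleO (fun n => (hg.1 n).le) (fun n => (hh.1 n).le) hgh
  obtain ⟨a, N, haN, hma, hlen⟩ := exists_sparse_blocks hg.2.2.1 hh hc hfreq m
  refine notMem_exh_of_forall_Ioc_subset hh.1 (fun k => ⟨a (k + 1), N (k + 1), ?_, (hlen _).1,
    subset_iUnion_of_subset k subset_rfl⟩) (hsub (blocks_mem_exh_seqM hg hm (by positivity)
      (fun i => (haN i).1) (fun i => (haN i).2.2) (fun i => (haN i).2.1) (fun i => (hma i).1)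
      (fun i => (hma i).2) fun i => (hlen i).2))
  have : k + 1 ≤ m (k + 1) := hm.id_le (k + 1)
  have := (hma k).1
  omega

/-- For `g, h ∈ 𝒢`, the following are equivalent: (a) the
compact-embedding property of `V[g(n)]` into `V[h(n)]`; (b) `g(n) = o(h(n))`;
(c) `Exh(φ_{g^M}) ⊆ Exh(φ_h)` for some increasing sequence `M`. -/
theorem stmt8 (g h : ℕ → ℝ) (hg : MemG g) (hh : MemG h) :
    (CompactEmbeddingChan g h ↔ Tendsto (fun n => g n / h n) atTop (nhds 0)) ∧
    ((∃ m : ℕ → ℕ, StrictMono m ∧ Exh (seqM g m) ⊆ Exh h) ↔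
      Tendsto (fun n => g n / h n) atTop (nhds 0)) := by
  rw [← Asymptotics.isLittleO_iff_tendsto fun n hn => absurd hn (hh.1 n).ne']
  exact ⟨⟨isLittleO_of_compactEmbeddingChan hg hh.1,
      compactEmbeddingChan_of_isLittleO hg.1 hh.1 hh.2.1⟩,
    ⟨fun ⟨_, hm, hsub⟩ => isLittleO_of_exh_seqM_subset hg hh hm hsub,
      exists_strictMono_exh_seqM_subset hg.1 hh.1⟩⟩
end

section
/- Let A = (a_n) be a Waterman sequence, M > 0, and let (x_j) be a sequence of functions in ABV with ‖x_j‖_{ABV} ≤ M for all j. Then there exists a subsequence (x_{j_k}) pointwise convergent on [0,1] to some function x with ‖x‖_{ABV} ≤ M; in particular x ∈ ABV. -/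
open Filter Set
open scoped ENNReal

/-!
Since `∑ aₙ` diverges, a bound on the `ABV` norm bounds, for each `ε > 0`, the number of
nonoverlapping intervals on which the function increases or decreases by more than `ε`.
A greedy construction then splits `[0,1]` into a number `K(ε)` of open pieces, on each of which
the function oscillates by at most `ε`, with `K(ε)` uniform along the sequence. A diagonal
extraction makes the partition points converge, and then the values at the rationals and
at the limit partition points. Every other point lies strictly inside a limit piece next to
a rational at which the values converge, so the values there form a Cauchy sequence. The
norm bound passes to the pointwise limit because it is a bound on finite sums.
-/
open scoped Topology

section ABVNorm

variable {a : ℕ → ℝ} {x : ℝ → ℝ} {M : ℝ}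

theorem eNormABV_le_ofReal_iff (ha : ∀ n, 0 ≤ a n) (hM : 0 ≤ M) :
    eNormABV a x ≤ ENNReal.ofReal M ↔ ∀ s t, Nonoverlapping s t → ∀ N,
      |x 0| + ∑ n ∈ Finset.range N, a n * |x (t n) - x (s n)| ≤ M := by
  have : Nonempty {p : (ℕ → ℝ) × (ℕ → ℝ) // Nonoverlapping p.1 p.2} :=
    ⟨⟨(1, 1), fun _ => ⟨zero_le_one, le_rfl, le_rfl⟩, fun _ _ _ => by simp⟩⟩
  simp only [eNormABV, eVar, ENNReal.add_iSup, iSup_le_iff, ENNReal.tsum_eq_iSup_nat,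
    Subtype.forall, Prod.forall]
  refine forall₄_congr fun s t _ N => ?_
  have hterm : ∀ n ∈ Finset.range N, 0 ≤ a n * |x (t n) - x (s n)| :=
    fun n _ => mul_nonneg (ha n) (abs_nonneg _)
  rw [← ENNReal.ofReal_sum_of_nonneg hterm, ← ENNReal.ofReal_add (abs_nonneg _)
    (Finset.sum_nonneg hterm), ENNReal.ofReal_le_ofReal_iff hM]

theorem Nonoverlapping.left_mem_Icc {s t : ℕ → ℝ} (h : Nonoverlapping s t) (n : ℕ) :
    s n ∈ Icc (0 : ℝ) 1 :=
  ⟨(h.1 n).1, (h.1 n).2.1.trans (h.1 n).2.2⟩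

theorem Nonoverlapping.right_mem_Icc {s t : ℕ → ℝ} (h : Nonoverlapping s t) (n : ℕ) :
    t n ∈ Icc (0 : ℝ) 1 :=
  ⟨(h.1 n).1.trans (h.1 n).2.1, (h.1 n).2.2⟩

theorem NonoverlappingFin.nonoverlapping_extend {N : ℕ} {s t : Fin N → ℝ}
    (h : NonoverlappingFin s t) :
    Nonoverlapping (fun n => if hn : n < N then s ⟨n, hn⟩ else 1)
      (fun n => if hn : n < N then t ⟨n, hn⟩ else 1) := by
  refine ⟨fun n => ?_, fun m n hmn => ?_⟩
  · dsimp only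
    split_ifs
    exacts [h.1 _, ⟨zero_le_one, le_rfl, le_rfl⟩]
  · dsimp only
    split_ifs with hm hn hn
    · exact h.2 (Fin.ne_of_val_ne hmn)
    all_goals simp

theorem NonoverlappingFin.sum_le (ha : ∀ n, 0 ≤ a n) (hM : 0 ≤ M)
    (hx : eNormABV a x ≤ ENNReal.ofReal M) {N : ℕ} {s t : Fin N → ℝ}
    (h : NonoverlappingFin s t) : |x 0| + ∑ i : Fin N, a i * |x (t i) - x (s i)| ≤ M := by
  have := (eNormABV_le_ofReal_iff ha hM).1 hx _ _ h.nonoverlapping_extend N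
  simpa only [← Fin.sum_univ_eq_sum_range, Fin.is_lt, dite_true, Fin.eta] using this

theorem abs_le_of_eNormABV_le (ha : ∀ n, 0 ≤ a n) (ha0 : 0 < a 0) (hM : 0 ≤ M)
    (hx : eNormABV a x ≤ ENNReal.ofReal M) {t : ℝ} (ht : t ∈ Icc (0 : ℝ) 1) :
    |x t| ≤ M + M / a 0 := by
  have hI : NonoverlappingFin (fun _ : Fin 1 => (0 : ℝ)) (fun _ => t) :=
    ⟨fun _ => ⟨le_rfl, ht.1, ht.2⟩, fun i j hij => absurd (Subsingleton.elim i j) hij⟩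
  have h := hI.sum_le ha hM hx
  simp only [Finset.univ_unique, Finset.sum_singleton, Fin.default_eq_zero, Fin.val_zero] at h
  have hinc : |x t - x 0| ≤ M / a 0 := by
    rw [le_div_iff₀ ha0]
    nlinarith [abs_nonneg (x 0)]
  linarith [abs_sub_abs_le_abs_sub (x t) (x 0), mul_nonneg ha0.le (abs_nonneg (x t - x 0))]

end ABVNorm

theorem nonoverlappingFin_of_separated {N : ℕ} {s t : Fin N → ℝ}
    (hst : ∀ i, 0 ≤ s i ∧ s i ≤ t i ∧ t i ≤ 1)
    (hsep : ∀ i j, i < j → t i ≤ s j ∨ t j ≤ s i) : NonoverlappingFin s t := by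
  refine ⟨hst, fun i j hij => ?_⟩
  change Disjoint _ _
  rw [Set.Ioo_disjoint_Ioo, min_le_iff, le_max_iff, le_max_iff]
  rcases hij.lt_or_gt with h | h
  · rcases hsep i j h with h' | h' <;> tauto
  · rcases hsep j i h with h' | h' <;> tauto

def FewerJumps (x : ℝ → ℝ) (ε : ℝ) (N : ℕ) : Prop :=
  ∀ s t : Fin N → ℝ, NonoverlappingFin s t → ∃ i, |x (t i) - x (s i)| ≤ ε

theorem exists_fewerJumps {a : ℕ → ℝ} (ha : ∀ n, 0 ≤ a n) (hns : ¬ Summable a) {M : ℝ}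
    (hM : 0 ≤ M) {ε : ℝ} (hε : 0 < ε) :
    ∃ N, ∀ x, eNormABV a x ≤ ENNReal.ofReal M → FewerJumps x ε N := by
  have hdiv : Tendsto (fun N => ∑ n ∈ Finset.range N, a n * ε) atTop atTop :=
    (not_summable_iff_tendsto_nat_atTop_of_nonneg fun n => mul_nonneg (ha n) hε.le).1
      (by rwa [summable_mul_right_iff hε.ne'])
  obtain ⟨N, hN⟩ := (hdiv.eventually_gt_atTop M).exists
  refine ⟨N, fun x hx s t hst => ?_⟩
  by_contra! hbig
  have hsum : ∑ n ∈ Finset.range N, a n * ε ≤ ∑ i : Fin N, a i * |x (t i) - x (s i)| := by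
    rw [← Fin.sum_univ_eq_sum_range]
    gcongr with i
    · exact ha i
    · exact (hbig i).le
  linarith [hst.sum_le ha hM hx, abs_nonneg (x 0)]

def OscLE (x : ℝ → ℝ) (ε c d : ℝ) : Prop :=
  ∀ u v, c < u → u ≤ v → v < d → |x v - x u| ≤ ε

def IsOscPartition (x : ℝ → ℝ) (ε : ℝ) (K : ℕ) (p : ℕ → ℝ) : Prop :=
  Monotone p ∧ p 0 = 0 ∧ p K = 1 ∧ (∀ i, p i ≤ 1) ∧ ∀ i, OscLE x ε (p i) (p (i + 1))

theorem IsOscPartition.mem_Icc {x : ℝ → ℝ} {ε : ℝ} {K : ℕ} {p : ℕ → ℝ}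
    (h : IsOscPartition x ε K p) (i : ℕ) : p i ∈ Icc (0 : ℝ) 1 :=
  ⟨h.2.1 ▸ h.1 (Nat.zero_le i), h.2.2.2.1 i⟩

theorem exists_jump_of_not_oscLE {x : ℝ → ℝ} {ε c d : ℝ} (h : ¬ OscLE x ε c d) :
    ∃ u v, c < u ∧ u ≤ v ∧ v < d ∧ ε < |x v - x u| := by
  simpa only [OscLE, not_forall, not_le, exists_prop] using h

namespace FewerJumps

variable {x : ℝ → ℝ} {ε : ℝ} {N : ℕ}

theorem exists_oscLE_right (h : FewerJumps x ε N) {c : ℝ} (hc0 : 0 ≤ c) (hc1 : c < 1) :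
    ∃ d, c < d ∧ d ≤ 1 ∧ OscLE x ε c d := by
  by_contra! hbad
  choose! u v huv using fun d (hcd : c < d) (hd : d ≤ 1) =>
    exists_jump_of_not_oscLE (hbad d hcd hd)
  -- intervals nested towards `c`: the `k`-th jump lies in `(c, D k)` and starts at `D (k + 1)`
  set D : ℕ → ℝ := fun k => u^[k] 1
  have hDsucc : ∀ k, D (k + 1) = u (D k) := fun k => Function.iterate_succ_apply' u k 1
  have hD : ∀ k, c < D k ∧ D k ≤ 1 := by
    intro k
    induction k with
    | zero => exact ⟨hc1, le_rfl⟩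
    | succ k ih =>
      obtain ⟨h1, h2, h3, -⟩ := huv _ ih.1 ih.2
      rw [hDsucc]
      exact ⟨h1, by linarith⟩
  have hDanti : Antitone D := antitone_nat_of_succ_le fun k => by
    obtain ⟨-, h2, h3, -⟩ := huv _ (hD k).1 (hD k).2
    rw [hDsucc]
    linarith
  obtain ⟨i, hi⟩ := h (fun i => u (D i)) (fun i => v (D i)) <| by
    refine nonoverlappingFin_of_separated (fun i => ?_) (fun i j hij => Or.inr ?_)
    · obtain ⟨h1, h2, h3, -⟩ := huv _ (hD i).1 (hD i).2
      exact ⟨by linarith, h2, by linarith [(hD i).2]⟩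
    · obtain ⟨-, -, h3, -⟩ := huv _ (hD j).1 (hD j).2
      rw [← hDsucc]
      exact h3.le.trans (hDanti (Nat.succ_le_of_lt hij))
  exact (huv _ (hD i).1 (hD i).2).2.2.2.not_ge hi

theorem exists_maximal_oscLE (h : FewerJumps x ε N) {c : ℝ} (hc0 : 0 ≤ c) (hc1 : c ≤ 1) :
    ∃ e, c ≤ e ∧ e ≤ 1 ∧ (c < 1 → c < e) ∧ OscLE x ε c e ∧
      ∀ d, e < d → d ≤ 1 → ¬ OscLE x ε c d := by
  set S := {d | c ≤ d ∧ d ≤ 1 ∧ OscLE x ε c d}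
  have hcS : c ∈ S :=
    ⟨le_rfl, hc1, fun u v hu huv hv => (lt_irrefl c ((hu.trans_le huv).trans hv)).elim⟩
  have hbdd : BddAbove S := ⟨1, fun d hd => hd.2.1⟩
  refine ⟨sSup S, le_csSup hbdd hcS, csSup_le ⟨c, hcS⟩ fun d hd => hd.2.1, fun hc => ?_,
    fun u v hu huv hv => ?_, fun d hd hd1 hosc => ?_⟩
  · obtain ⟨d, hcd, hd1, hosc⟩ := h.exists_oscLE_right hc0 hc
    exact hcd.trans_le (le_csSup hbdd ⟨hcd.le, hd1, hosc⟩)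
  · obtain ⟨d, hdS, hvd⟩ := exists_lt_of_lt_csSup ⟨c, hcS⟩ hv
    exact hdS.2.2 u v hu huv hvd
  · exact hd.not_ge (le_csSup hbdd ⟨(le_csSup hbdd hcS).trans hd.le, hd1, hosc⟩)

theorem exists_isOscPartition (h : FewerJumps x ε N) : ∃ p, IsOscPartition x ε (2 * N) p := by
  choose! next hnext using fun c (hc0 : 0 ≤ c) (hc1 : c ≤ 1) => h.exists_maximal_oscLE hc0 hc1
  set p : ℕ → ℝ := fun i => next^[i] 0
  have hpsucc : ∀ i, p (i + 1) = next (p i) := fun i => Function.iterate_succ_apply' next i 0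
  have hp : ∀ i, 0 ≤ p i ∧ p i ≤ 1 := by
    intro i
    induction i with
    | zero => exact ⟨le_rfl, zero_le_one⟩
    | succ i ih =>
      rw [hpsucc]
      exact ⟨ih.1.trans (hnext _ ih.1 ih.2).1, (hnext _ ih.1 ih.2).2.1⟩
  have hstep := fun i => hnext (p i) (hp i).1 (hp i).2
  simp only [← hpsucc] at hstep
  have hmono : Monotone p := monotone_nat_of_le_succ fun i => (hstep i).1
  refine ⟨p, hmono, rfl, ?_, fun i => (hp i).2, fun i => (hstep i).2.2.2.1⟩
  by_contra hne
  have hlt : p (2 * N) < 1 := lt_of_le_of_ne (hp _).2 hne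
  -- the greedy step from `p (2n)` stops strictly before `p (2n + 2)`, so a jump lies between them
  have hjump : ∀ n : Fin N,
      ∃ u v, p (2 * n) < u ∧ u ≤ v ∧ v < p (2 * n + 2) ∧ ε < |x v - x u| := by
    intro n
    have hprog := (hstep (2 * n + 1)).2.2.1 ((hmono (by omega)).trans_lt hlt)
    exact exists_jump_of_not_oscLE ((hstep (2 * n)).2.2.2.2 _ hprog (hp _).2)
  choose u v huv using hjump
  obtain ⟨i, hi⟩ := h u v <| by
    refine nonoverlappingFin_of_separated (fun i => ?_) (fun i j hij => Or.inl ?_)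
    · obtain ⟨h1, h2, h3, -⟩ := huv i
      exact ⟨(hp _).1.trans h1.le, h2, h3.le.trans (hp _).2⟩
    · have hij' : 2 * (i : ℕ) + 2 ≤ 2 * j := by have := Fin.lt_def.1 hij; omega
      exact (huv i).2.2.1.le.trans ((hmono hij').trans (huv j).1.le)
  exact (huv i).2.2.2.not_ge hi

end FewerJumps

theorem exists_subseq_tendsto_of_bounded {ι : Type*} [Countable ι] (F : ℕ → ι → ℝ) {C : ℝ}
    (hF : ∀ j i, |F j i| ≤ C) :
    ∃ φ : ℕ → ℕ, StrictMono φ ∧ ∃ g : ι → ℝ,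
      ∀ i, Tendsto (fun k => F (φ k) i) atTop (𝓝 (g i)) := by
  have hmem : ∀ j, F j ∈ Set.pi univ fun _ => Icc (-C) C := fun j =>
    Set.mem_univ_pi.2 fun i => abs_le.1 (hF j i)
  obtain ⟨g, -, φ, hφ, hconv⟩ := (isCompact_univ_pi fun _ => isCompact_Icc).isSeqCompact hmem
  exact ⟨φ, hφ, g, tendsto_pi_nhds.1 hconv⟩

theorem exists_lt_lt_succ_of_forall_ne {q : ℕ → ℝ} {t : ℝ} (ht : ∀ i, q i ≠ t) {K : ℕ}
    (h0 : q 0 ≤ t) (hK : t ≤ q K) : ∃ i, q i < t ∧ t < q (i + 1) := by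
  induction K with
  | zero => exact absurd (le_antisymm h0 hK) (ht 0)
  | succ K ih =>
    rcases lt_or_ge t (q K) with h | h
    · exact ih h.le
    · exact ⟨K, lt_of_le_of_ne h (ht K), lt_of_le_of_ne hK (ht (K + 1)).symm⟩

theorem exists_rat_eventually_abs_sub_le_of_isOscPartition {g : ℕ → ℝ → ℝ} {ε : ℝ} {K : ℕ}
    {P : ℕ → ℕ → ℝ} {q : ℕ → ℝ} (hP : ∀ k, IsOscPartition (g k) ε K (P k))
    (hq : ∀ i, Tendsto (fun k => P k i) atTop (𝓝 (q i))) {t : ℝ} (ht : t ∈ Icc (0 : ℝ) 1)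
    (htq : ∀ i, q i ≠ t) :
    ∃ r : ℚ, (r : ℝ) ∈ Icc (0 : ℝ) 1 ∧ ∀ᶠ k in atTop, |g k t - g k r| ≤ ε := by
  have hq0 : q 0 = 0 := tendsto_nhds_unique (hq 0) <| by
    simp only [fun k => (hP k).2.1]
    exact tendsto_const_nhds
  have hqK : q K = 1 := tendsto_nhds_unique (hq K) <| by
    simp only [fun k => (hP k).2.2.1]
    exact tendsto_const_nhds
  obtain ⟨i, hi, hi'⟩ := exists_lt_lt_succ_of_forall_ne htq (hq0 ▸ ht.1) (hqK ▸ ht.2)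
  obtain ⟨r, hr, hrt⟩ := exists_rat_btwn hi
  have hqi : 0 ≤ q i := ge_of_tendsto' (hq i) fun k => ((hP k).mem_Icc i).1
  refine ⟨r, ⟨hqi.trans hr.le, hrt.le.trans ht.2⟩, ?_⟩
  filter_upwards [(hq i).eventually_lt_const hr, (hq (i + 1)).eventually_const_lt hi'] with k h1 h2
  exact (hP k).2.2.2.2 i r t h1 hrt.le h2

theorem cauchySeq_of_forall_eventually_abs_sub_le {u : ℕ → ℝ}
    (h : ∀ δ > 0, ∃ v : ℕ → ℝ, CauchySeq v ∧ ∀ᶠ k in atTop, |u k - v k| ≤ δ) :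
    CauchySeq u := by
  refine Metric.cauchySeq_iff.2 fun δ hδ => ?_
  obtain ⟨v, hv, hnear⟩ := h (δ / 4) (by positivity)
  obtain ⟨N₁, hN₁⟩ := Metric.cauchySeq_iff.1 hv (δ / 4) (by positivity)
  obtain ⟨N₂, hN₂⟩ := eventually_atTop.1 hnear
  refine ⟨max N₁ N₂, fun m hm n hn => ?_⟩
  have hv' := hN₁ m (le_of_max_le_left hm) n (le_of_max_le_left hn)
  have hm' := hN₂ m (le_of_max_le_right hm)
  have hn' := hN₂ n (le_of_max_le_right hn)
  rw [Real.dist_eq] at hv' ⊢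
  linarith [abs_sub_le (u m) (v m) (u n), abs_sub_le (v m) (v n) (u n), abs_sub_comm (v n) (u n)]

theorem exists_subseq_tendsto_of_isOscPartition {f : ℕ → ℝ → ℝ} {C : ℝ}
    (hC : ∀ j, ∀ t ∈ Icc (0 : ℝ) 1, |f j t| ≤ C)
    (hpart : ∀ ε > 0, ∃ K, ∀ j, ∃ p, IsOscPartition (f j) ε K p) :
    ∃ φ : ℕ → ℕ, StrictMono φ ∧ ∃ y : ℝ → ℝ,
      ∀ t ∈ Icc (0 : ℝ) 1, Tendsto (fun k => f (φ k) t) atTop (𝓝 (y t)) := by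
  choose K p hp using fun m : ℕ => hpart (1 / (m + 1)) Nat.one_div_pos_of_nat
  obtain ⟨φ₁, hφ₁, q, hq⟩ := exists_subseq_tendsto_of_bounded
    (fun j (mi : ℕ × ℕ) => p mi.1 j mi.2) (C := 1) fun j mi => by
      have := (hp mi.1 j).mem_Icc mi.2
      exact abs_le.2 ⟨by linarith [this.1], this.2⟩
  set S : Set ℝ := (Icc 0 1 ∩ range ((↑) : ℚ → ℝ)) ∪ range q
  have hSI : S ⊆ Icc 0 1 := union_subset inter_subset_left <| by
    rintro _ ⟨mi, rfl⟩
    exact isClosed_Icc.mem_of_tendsto (hq mi) (Eventually.of_forall fun k => (hp _ _).mem_Icc _)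
  have : Countable S :=
    (((countable_range _).mono inter_subset_right).union (countable_range _)).to_subtype
  obtain ⟨φ₂, hφ₂, _, hL⟩ := exists_subseq_tendsto_of_bounded
    (fun j (s : S) => f (φ₁ j) s) fun j s => hC _ _ (hSI s.2)
  set g : ℕ → ℝ → ℝ := fun k => f (φ₁ (φ₂ k))
  have hgS : ∀ s ∈ S, CauchySeq fun k => g k s := fun s hs => (hL ⟨s, hs⟩).cauchySeq
  refine ⟨φ₁ ∘ φ₂, hφ₁.comp hφ₂, fun t => limUnder atTop fun k => g k t,
    fun t ht => CauchySeq.tendsto_limUnder ?_⟩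
  refine cauchySeq_of_forall_eventually_abs_sub_le fun δ hδ => ?_
  by_cases htS : t ∈ S
  · exact ⟨fun k => g k t, hgS t htS, Eventually.of_forall fun k => by simpa [g] using hδ.le⟩
  obtain ⟨m, hm⟩ := exists_nat_one_div_lt hδ
  obtain ⟨r, hr, hev⟩ := exists_rat_eventually_abs_sub_le_of_isOscPartition (g := g)
    (fun k => hp m _) (fun i => (hq (m, i)).comp hφ₂.tendsto_atTop) ht
    (fun i h => htS (Or.inr ⟨(m, i), h⟩))
  exact ⟨_, hgS r (Or.inl ⟨hr, r, rfl⟩), hev.mono fun k hk => hk.trans hm.le⟩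

theorem eNormABV_le_of_tendsto {a : ℕ → ℝ} (ha : ∀ n, 0 ≤ a n) {M : ℝ} (hM : 0 ≤ M)
    {f : ℕ → ℝ → ℝ} {y : ℝ → ℝ} (hf : ∀ k, eNormABV a (f k) ≤ ENNReal.ofReal M)
    (hy : ∀ t ∈ Icc (0 : ℝ) 1, Tendsto (fun k => f k t) atTop (𝓝 (y t))) :
    eNormABV a y ≤ ENNReal.ofReal M := by
  refine (eNormABV_le_ofReal_iff ha hM).2 fun s t hst N => ?_
  have hlim : Tendsto (fun k => |f k 0| + ∑ n ∈ Finset.range N, a n * |f k (t n) - f k (s n)|)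
      atTop (𝓝 (|y 0| + ∑ n ∈ Finset.range N, a n * |y (t n) - y (s n)|)) :=
    (hy 0 ⟨le_rfl, zero_le_one⟩).abs.add <| tendsto_finsetSum _ fun n _ =>
      (((hy _ (hst.right_mem_Icc n)).sub (hy _ (hst.left_mem_Icc n))).abs).const_mul (a n)
  exact le_of_tendsto' hlim fun k => (eNormABV_le_ofReal_iff ha hM).1 (hf k) s t hst N

theorem stmt14_general (a : ℕ → ℝ) (hA : IsWaterman a) (M : ℝ) (hM : 0 < M)
    (x : ℕ → ℝ → ℝ) (hbdd : ∀ j, eNormABV a (x j) ≤ ENNReal.ofReal M) :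
    ∃ φ : ℕ → ℕ, StrictMono φ ∧ ∃ y : ℝ → ℝ,
      (∀ t ∈ Set.Icc (0 : ℝ) 1, Tendsto (fun k => x (φ k) t) atTop (nhds (y t))) ∧
      eNormABV a y ≤ ENNReal.ofReal M ∧ MemABV a y := by
  obtain ⟨-, hpos, hns⟩ := hA
  have ha : ∀ n, 0 ≤ a n := fun n => (hpos n).le
  have hpart : ∀ ε > 0, ∃ K, ∀ j, ∃ p, IsOscPartition (x j) ε K p := fun ε hε => by
    obtain ⟨N, hN⟩ := exists_fewerJumps ha hns hM.le hε
    exact ⟨2 * N, fun j => (hN _ (hbdd j)).exists_isOscPartition⟩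
  obtain ⟨φ, hφ, y, hy⟩ := exists_subseq_tendsto_of_isOscPartition
    (fun j t ht => abs_le_of_eNormABV_le ha (hpos 0) hM.le (hbdd j) ht) hpart
  have hyM := eNormABV_le_of_tendsto ha hM.le (fun k => hbdd (φ k)) hy
  exact ⟨φ, hφ, y, hy, hyM, (le_add_self.trans hyM).trans_lt ENNReal.ofReal_lt_top⟩

/-- Helly-type selection principle for Waterman spaces: a sequence in
`ABV` bounded by `M` in the `ABV` norm has a subsequence converging pointwise on `[0,1]`
to a function `x` with `‖x‖_{ABV} ≤ M`; in particular `x ∈ ABV`. -/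
theorem stmt14 (a : ℕ → ℝ) (hA : IsWaterman a) (M : ℝ) (hM : 0 < M)
    (x : ℕ → ℝ → ℝ) (hmem : ∀ j, MemABV a (x j))
    (hbdd : ∀ j, eNormABV a (x j) ≤ ENNReal.ofReal M) :
    ∃ φ : ℕ → ℕ, StrictMono φ ∧ ∃ y : ℝ → ℝ,
      (∀ t ∈ Set.Icc (0 : ℝ) 1, Tendsto (fun k => x (φ k) t) atTop (nhds (y t))) ∧
      eNormABV a y ≤ ENNReal.ofReal M ∧ MemABV a y :=
  stmt14_general a hA M hM x hbdd
end
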